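/- Every group homomorphism between T-complete abelian groups is automatically a ℤ̂_T-module homomorphism with respect to their canonical ℤ̂_T-module structures. -/

import Mathlib

open CategoryTheory

noncomputable instance : HasExt.{1} (ModuleCat.{0} ℤ) := by
  letI := HasDerivedCategory.standard (ModuleCat.{0} ℤ)
  exact hasExt_of_hasDerivedCategory _

/-- `ℤ[T⁻¹]`, the subring of `ℚ` generated by the inverses of the primes in `T`. -/
def ZInvT (T : Set ℕ) : Subring ℚ :=
  Subring.closure {x : ℚ | ∃ p ∈ T, (p : ℚ) * x = 1}

/-- The inclusion `ℤ → ℤ[T⁻¹]` as a `ℤ`-linear map. -/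
noncomputable def ZInvT.incl (T : Set ℕ) : ℤ →ₗ[ℤ] (ZInvT T) :=
  Algebra.linearMap ℤ (ZInvT T)

/-- `ℤ[T⁻¹]/ℤ`. -/
abbrev ZInvTQuot (T : Set ℕ) : Type :=
  (ZInvT T) ⧸ (LinearMap.range (ZInvT.incl T))

/-- `E_T(A) = Ext¹(ℤ[T⁻¹]/ℤ, A)`. -/
noncomputable abbrev ET (T : Set ℕ) (A : Type) [AddCommGroup A] [Module ℤ A] : Type 1 :=
  Abelian.Ext (ModuleCat.of ℤ (ZInvTQuot T)) (ModuleCat.of ℤ A) 1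

/-- `A` is `T`-complete iff `Hom(ℤ[T⁻¹], A) = 0` and `Ext¹(ℤ[T⁻¹], A) = 0`. -/
def IsTComplete (T : Set ℕ) (A : Type) [AddCommGroup A] [Module ℤ A] : Prop :=
  (∀ f : (ZInvT T) →ₗ[ℤ] A, f = 0) ∧
    Subsingleton (Abelian.Ext (ModuleCat.of ℤ (ZInvT T)) (ModuleCat.of ℤ A) 1)

lemma ZInvT.incl_injective (T : Set ℕ) : Function.Injective (ZInvT.incl T) := by
  intro a b h
  have h' : ((ZInvT.incl T a : ZInvT T) : ℚ) = ((ZInvT.incl T b : ZInvT T) : ℚ) := by rw [h]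
  have ha : ((ZInvT.incl T a : ZInvT T) : ℚ) = (a : ℚ) := by
    simp [ZInvT.incl, Algebra.linearMap_apply]
  have hb : ((ZInvT.incl T b : ZInvT T) : ℚ) = (b : ℚ) := by
    simp [ZInvT.incl, Algebra.linearMap_apply]
  rw [ha, hb] at h'
  exact_mod_cast h'

/-- The short exact sequence `0 → ℤ → ℤ[T⁻¹] → ℤ[T⁻¹]/ℤ → 0`. -/
noncomputable def ZInvTSeq (T : Set ℕ) : ShortComplex (ModuleCat.{0} ℤ) :=
  ShortComplex.mk (ModuleCat.ofHom (ZInvT.incl T))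
    (ModuleCat.ofHom (LinearMap.range (ZInvT.incl T)).mkQ)
    (by
      refine ModuleCat.hom_ext (LinearMap.ext fun n => ?_)
      exact (Submodule.Quotient.mk_eq_zero _).2 (LinearMap.mem_range_self _ n))

lemma ZInvTSeq_shortExact (T : Set ℕ) : (ZInvTSeq T).ShortExact where
  exact := by
    rw [ShortComplex.moduleCat_exact_iff]
    intro x hx
    exact (Submodule.Quotient.mk_eq_zero _).1 hx
  mono_f := by
    rw [ModuleCat.mono_iff_injective]
    exact ZInvT.incl_injective T
  epi_g := by
    rw [ModuleCat.epi_iff_surjective]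
    exact Submodule.mkQ_surjective _

lemma Abelian.Ext.mk₀_add {C : Type*} [Category C] [Abelian C] [HasExt.{1} C]
    {X Y : C} (f g : X ⟶ Y) :
    Abelian.Ext.mk₀ (f + g) = Abelian.Ext.mk₀ f + Abelian.Ext.mk₀ g := by
  letI := HasDerivedCategory.standard C
  ext
  simp [Abelian.Ext.add_hom, ShiftedHom.mk₀, Functor.map_add, Preadditive.add_comp]

/-- The canonical completion map `A → E_T(A)`, i.e. the connecting homomorphism of
`0 → ℤ → ℤ[T⁻¹] → ℤ[T⁻¹]/ℤ → 0` composed with `A ≅ Hom(ℤ, A) = Ext⁰(ℤ, A)`. -/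
noncomputable def completionMap (T : Set ℕ) (A : Type) [AddCommGroup A] [Module ℤ A] :
    A →+ ET T A :=
  (((ZInvTSeq_shortExact T).extClass).precomp (ModuleCat.of ℤ A) (add_zero 1)).comp
    (AddMonoidHom.mk'
      (fun a => Abelian.Ext.mk₀ (ModuleCat.ofHom (LinearMap.toSpanSingleton ℤ A a)))
      (fun a b => by
        beta_reduce
        rw [show (ModuleCat.ofHom (LinearMap.toSpanSingleton ℤ A (a + b)))
              = ModuleCat.ofHom (LinearMap.toSpanSingleton ℤ A a)
                + ModuleCat.ofHom (LinearMap.toSpanSingleton ℤ A b) from by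
              exact ModuleCat.hom_ext (LinearMap.ext fun x => smul_add (M := ℤ) x a b)]
        exact Abelian.Ext.mk₀_add _ _))

/-- `ℤ̂_T = ∏_{p ∈ T} ℤ_p`. -/
def ZHatT (T : Set ℕ) (hT : ∀ p ∈ T, Nat.Prime p) : Type :=
  ∀ p : T, haveI : Fact (Nat.Prime p.1) := ⟨hT p.1 p.2⟩; ℤ_[p.1]

noncomputable instance (T : Set ℕ) (hT : ∀ p ∈ T, Nat.Prime p) : CommRing (ZHatT T hT) :=
  @Pi.commRing _ _ (fun p => by
    haveI : Fact (Nat.Prime p.1) := ⟨hT p.1 p.2⟩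
    infer_instance)

/-- The underlying scalar multiplication of a module structure. -/
def moduleSMul {R M : Type*} [Semiring R] [AddCommMonoid M] (m : Module R M) :
    R → M → M :=
  fun r x => m.toDistribMulAction.toMulAction.toSMul.smul r x

/-- In `ℤ_[p]`, a prime `q ≠ p` is a unit. -/
lemma isUnit_padic_of_ne (p q : ℕ) [Fact (Nat.Prime p)] (hq : Nat.Prime q)
    (hne : p ≠ q) : IsUnit (q : ℤ_[p]) := by
  rw [PadicInt.isUnit_iff]
  refine le_antisymm (PadicInt.norm_le_one _) ?_
  by_contra hlt
  push_neg at hlt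
  have h1 : ‖((q : ℤ) : ℤ_[p])‖ < 1 := by push_cast; exact hlt
  rw [PadicInt.norm_int_lt_one_iff_dvd] at h1
  have h2 : p ∣ q := Int.ofNat_dvd.mp h1
  exact hne ((Nat.prime_dvd_prime_iff_eq (Fact.out) hq).mp h2)

/-- For any prime `q`, any element of `ẐT` is congruent to an integer mod `q`. -/
lemma zHatT_exists_prime_div (T : Set ℕ) (hT : ∀ p ∈ T, Nat.Prime p)
    (q : ℕ) (hq : Nat.Prime q) (r : ZHatT T hT) :
    ∃ (s : ZHatT T hT) (k : ℤ), r = (q : ZHatT T hT) * s + (k : ZHatT T hT) := by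
  classical
  by_cases hqT : q ∈ T
  · haveI : Fact (Nat.Prime q) := ⟨hq⟩
    set q' : T := ⟨q, hqT⟩
    set k : ℤ := (PadicInt.zmodRepr (r q') : ℤ) with hk
    have hdvd : ∀ p : T, haveI : Fact (Nat.Prime p.1) := ⟨hT p.1 p.2⟩;
        (q : ℤ_[p.1]) ∣ (r p - (k : ℤ_[p.1])) := by
      intro p
      haveI : Fact (Nat.Prime p.1) := ⟨hT p.1 p.2⟩
      by_cases hpq : p = q'
      · subst hpq
        have hmem := PadicInt.sub_zmodRepr_mem (r q')
        rw [PadicInt.maximalIdeal_eq_span_p, Ideal.mem_span_singleton] at hmem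
        simpa [hk] using hmem
      · have hne : p.1 ≠ q := fun h => hpq (Subtype.ext h)
        exact (isUnit_padic_of_ne p.1 q hq hne).dvd
    refine ⟨fun p => haveI : Fact (Nat.Prime p.1) := ⟨hT p.1 p.2⟩;
      Classical.choose (hdvd p), k, ?_⟩
    funext p
    haveI : Fact (Nat.Prime p.1) := ⟨hT p.1 p.2⟩
    have hc := Classical.choose_spec (hdvd p)
    show r p = (q : ℤ_[p.1]) * _ + (k : ℤ_[p.1])
    rw [← hc]; ring
  · have hdvd : ∀ p : T, haveI : Fact (Nat.Prime p.1) := ⟨hT p.1 p.2⟩;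
        (q : ℤ_[p.1]) ∣ (r p) := by
      intro p
      haveI : Fact (Nat.Prime p.1) := ⟨hT p.1 p.2⟩
      have hne : p.1 ≠ q := fun h => hqT (h ▸ p.2)
      exact (isUnit_padic_of_ne p.1 q hq hne).dvd
    refine ⟨fun p => haveI : Fact (Nat.Prime p.1) := ⟨hT p.1 p.2⟩;
      Classical.choose (hdvd p), 0, ?_⟩
    funext p
    haveI : Fact (Nat.Prime p.1) := ⟨hT p.1 p.2⟩
    have hc := Classical.choose_spec (hdvd p)
    show r p = (q : ℤ_[p.1]) * _ + ((0 : ℤ) : ℤ_[p.1])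
    rw [← hc]; ring

/-- Any element of `ẐT` is congruent to an integer mod any positive natural. -/
lemma zHatT_exists_div (T : Set ℕ) (hT : ∀ p ∈ T, Nat.Prime p)
    (n : ℕ) (hn : 0 < n) (r : ZHatT T hT) :
    ∃ (s : ZHatT T hT) (k : ℤ), r = (n : ZHatT T hT) * s + (k : ZHatT T hT) := by
  induction n using Nat.strong_induction_on generalizing r with
  | _ n ih =>
    rcases eq_or_ne n 1 with rfl | hne
    · exact ⟨r, 0, by push_cast; ring⟩
    · obtain ⟨q, hq, m, rfl⟩ : ∃ q, Nat.Prime q ∧ ∃ m, n = q * m := by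
        obtain ⟨q, hq, c, hc⟩ := Nat.exists_prime_and_dvd hne
        exact ⟨q, hq, c, hc⟩
      have hm : 0 < m := Nat.pos_of_ne_zero fun h => by simp [h] at hn
      have hlt : m < q * m := (Nat.lt_mul_iff_one_lt_left hm).mpr hq.one_lt
      obtain ⟨s₁, k₁, h₁⟩ := zHatT_exists_prime_div T hT q hq r
      obtain ⟨s₂, k₂, h₂⟩ := ih m hlt hm s₁
      refine ⟨s₂, (q : ℤ) * k₂ + k₁, ?_⟩
      rw [h₁, h₂]
      push_cast
      ring

/-- A divisible subgroup of a `T`-complete group is trivial. -/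
lemma divisible_subgroup_trivial (T : Set ℕ) {B : Type} [AddCommGroup B]
    (hB : ∀ g : (ZInvT T) →ₗ[ℤ] B, g = 0) (D : AddSubgroup B)
    (hdiv : ∀ d ∈ D, ∀ n : ℕ, 0 < n → ∃ d' ∈ D, n • d' = d) :
    ∀ d ∈ D, d = 0 := by
  classical
  intro d hd
  haveI : DivisibleBy (↥D) ℕ :=
    { div := fun a n =>
        if h : 0 < n then
          ⟨Classical.choose (hdiv a.1 a.2 n h),
            (Classical.choose_spec (hdiv a.1 a.2 n h)).1⟩
        else 0
      div_zero := fun a => by simp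
      div_cancel := fun {n} a hn => by
        have hpos : 0 < n := Nat.pos_of_ne_zero hn
        simp only [dif_pos hpos]
        apply Subtype.ext
        have := (Classical.choose_spec (hdiv a.1 a.2 n hpos)).2
        simpa using this }
  haveI : DivisibleBy (↥D) ℤ := AddGroup.divisibleByIntOfDivisibleByNat _
  haveI hinj : Module.Injective ℤ (↥D) := (Module.Baer.of_divisible (↥D)).injective
  obtain ⟨h, hh⟩ := hinj.out (ZInvT.incl T) (ZInvT.incl_injective T)
    (LinearMap.toSpanSingleton ℤ (↥D) ⟨d, hd⟩)
  set g : (ZInvT T) →ₗ[ℤ] B := D.subtype.toIntLinearMap.comp h with hg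
  have hg0 : g = 0 := hB g
  have : g (ZInvT.incl T 1) = d := by
    rw [hg]
    simp only [LinearMap.comp_apply, hh 1]
    simp [LinearMap.toSpanSingleton_apply]
  rw [hg0] at this
  simpa using this.symm

lemma moduleSMul_add_right {R M : Type*} [Semiring R] [AddCommMonoid M] (m : Module R M)
    (x y : R) (a : M) :
    moduleSMul m (x + y) a = moduleSMul m x a + moduleSMul m y a := by
  letI := m
  exact add_smul x y a

lemma moduleSMul_smul_add {R M : Type*} [Semiring R] [AddCommMonoid M] (m : Module R M)
    (x : R) (a b : M) :
    moduleSMul m x (a + b) = moduleSMul m x a + moduleSMul m x b := by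
  letI := m
  exact smul_add x a b

lemma moduleSMul_mul {R M : Type*} [Semiring R] [AddCommMonoid M] (m : Module R M)
    (x y : R) (a : M) :
    moduleSMul m (x * y) a = moduleSMul m x (moduleSMul m y a) := by
  letI := m
  exact mul_smul x y a

/-- Every group homomorphism between `T`-complete abelian groups is automatically a
`ℤ̂_T`-module homomorphism with respect to their canonical `ℤ̂_T`-module structures (the ones
extending the abelian group structures). -/
theorem addMonoidHom_is_zHatT_linear (T : Set ℕ) (hne : T.Nonempty)
    (hT : ∀ p ∈ T, Nat.Prime p) (A B : Type) [AddCommGroup A] [AddCommGroup B]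
    (hA : IsTComplete T A) (hB : IsTComplete T B)
    (mA : Module (ZHatT T hT) A) (mB : Module (ZHatT T hT) B)
    (hmA : ∀ (n : ℤ) (a : A), moduleSMul mA ((n : ℤ) : ZHatT T hT) a = n • a)
    (hmB : ∀ (n : ℤ) (b : B), moduleSMul mB ((n : ℤ) : ZHatT T hT) b = n • b)
    (f : A →+ B) :
    ∀ (r : ZHatT T hT) (a : A), f (moduleSMul mA r a) = moduleSMul mB r (f a) := by
  intro r a
  set φ : ZHatT T hT →+ B := AddMonoidHom.mk'
    (fun x => f (moduleSMul mA x a) - moduleSMul mB x (f a))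
    (fun x y => by
      beta_reduce
      rw [moduleSMul_add_right, moduleSMul_add_right, map_add]
      abel) with hφ
  have hφ_apply : ∀ x : ZHatT T hT,
      φ x = f (moduleSMul mA x a) - moduleSMul mB x (f a) := fun x => rfl
  have hint : ∀ k : ℤ, φ ((k : ℤ) : ZHatT T hT) = 0 := by
    intro k
    rw [hφ_apply, hmA, hmB, map_zsmul, sub_self]
  have hdiv : ∀ d ∈ φ.range, ∀ n : ℕ, 0 < n → ∃ d' ∈ φ.range, n • d' = d := by
    intro d hd n hn
    obtain ⟨x, rfl⟩ := hd
    obtain ⟨s, k, hx⟩ := zHatT_exists_div T hT n hn x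
    refine ⟨φ s, ⟨s, rfl⟩, ?_⟩
    calc n • φ s = φ (n • s) := (map_nsmul φ n s).symm
      _ = φ ((n : ZHatT T hT) * s) := by rw [nsmul_eq_mul]
      _ = φ ((n : ZHatT T hT) * s) + φ ((k : ZHatT T hT)) := by rw [hint, add_zero]
      _ = φ x := by rw [← map_add, ← hx]
  have hzero : φ r = 0 :=
    divisible_subgroup_trivial T hB.1 φ.range hdiv (φ r) ⟨r, rfl⟩
  rw [hφ_apply, sub_eq_zero] at hzero
  exact hzero
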